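/- Let p be an odd prime, k ≥ 1 an integer, and 0 ≤ j ≤ 2k. Then the function τ ↦ (pτ+1)^{−2k}·φ(τ/(pτ+1))^{4k−2j}·φ(pτ/(pτ+1))^{2j} tends to (−1)^k·χ₋₄(p)^{j}/2^{2k} as Im τ → ∞. -/

import Mathlib

open Complex UpperHalfPlane Filter Matrix CongruenceSubgroup
open scoped Real MatrixGroups Manifold

noncomputable section

/-- The primitive Dirichlet character mod 4: `1` on `1 mod 4`, `-1` on `3 mod 4`, `0` on evens. -/
def chi4 (n : ℤ) : ℤ := if n % 4 = 1 then 1 else if n % 4 = 3 then -1 else 0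

/-- Ramanujan's theta function `φ(z) = Σ_{n ∈ ℤ} exp(2πi n² z)` (convergent on `ℍ`). -/
def phi (z : ℂ) : ℂ := ∑' n : ℤ, Complex.exp (2 * (π : ℂ) * Complex.I * (n : ℂ) ^ 2 * z)

open Topology

/-!
Put `u = pτ + 1`, so that `τ/(pτ+1) = (u-1)/(pu)` and `pτ/(pτ+1) = 1 - 1/u`. Jacobi's inversion
formula gives `φ(1 - 1/u)² = u/(2i) · θ(0, u/2)²`, and, after splitting the series of
`φ((u-1)/(pu))` into residue classes mod `p`, also
`φ((u-1)/(pu))² = u/(2ip) · (Σ_r e(r²/p) θ(r/p, u/(2p)))²`.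
With `n = 2k - j` the powers of `u` cancel against `(pτ+1)^{2k}`, and since every Jacobi theta value
tends to `1` as `Im u → ∞`, the limit is `G^{2n} / ((2ip)^n (2i)^j)` for the quadratic Gauss sum
`G = Σ_r e(r²/p)`. Finally `G² = χ₋₄(p) p` and `n ≡ j (mod 2)`.
-/

lemma jacobiTheta₂_term_zero_two_mul (n : ℤ) (z : ℂ) :
    jacobiTheta₂_term n 0 (2 * z) = cexp (2 * π * Complex.I * n ^ 2 * z) := by
  rw [jacobiTheta₂_term]
  ring_nf

lemma phi_eq_jacobiTheta₂ (z : ℂ) : phi z = jacobiTheta₂ 0 (2 * z) :=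
  tsum_congr fun n => (jacobiTheta₂_term_zero_two_mul n z).symm

lemma summable_phi_term {z : ℂ} (hz : 0 < z.im) :
    Summable fun n : ℤ => cexp (2 * π * Complex.I * n ^ 2 * z) := by
  refine ((summable_jacobiTheta₂_term_iff 0 (2 * z)).mpr ?_).congr
    fun n => jacobiTheta₂_term_zero_two_mul n z
  simpa using hz

lemma one_div_cpow_half_sq (w : ℂ) : (1 / w ^ (1 / 2 : ℂ)) ^ 2 = 1 / w := by
  rw [div_pow, one_pow, one_div (2 : ℂ), cpow_ofNat_inv_pow]

lemma phi_one_sub_inv {u : ℂ} (hu : u ≠ 0) :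
    phi (1 - 1 / u) = 1 / (2 * Complex.I / u) ^ (1 / 2 : ℂ) * jacobiTheta₂ 0 (u / 2) := by
  rw [phi_eq_jacobiTheta₂, show 2 * (1 - 1 / u) = -2 / u + 2 by field_simp; ring,
    jacobiTheta₂_add_right, jacobiTheta₂_functional_equation,
    show -Complex.I * (-2 / u) = 2 * Complex.I / u by ring,
    show -1 / (-2 / u) = u / 2 by field_simp]
  simp

lemma tsum_int_eq_sum_fin_tsum {M : Type*} [AddCommGroup M] [UniformSpace M] [IsUniformAddGroup M]
    [CompleteSpace M] [T0Space M] {f : ℤ → M} (hf : Summable f) (N : ℕ) [NeZero N] :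
    ∑' n, f n = ∑ r : Fin N, ∑' m : ℤ, f (m * N + r) := by
  let e : Fin N × ℤ ≃ ℤ := (Equiv.prodComm _ _).trans (Int.divModEquiv N).symm
  have he : Summable fun c => f (e c) := hf.comp_injective e.injective
  rw [← e.tsum_eq f, he.tsum_prod, tsum_fintype]
  rfl

def quadGaussSum (p : ℕ) : ℂ := ∑ r : Fin p, cexp (2 * π * Complex.I * (r : ℂ) ^ 2 / p)

def twistedTheta (p : ℕ) (u : ℂ) : ℂ :=
  ∑ r : Fin p, cexp (2 * π * Complex.I * (r : ℂ) ^ 2 / p) * jacobiTheta₂ (r / p) (u / (2 * p))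

/- `(mp + r)² / p ≡ r² / p (mod ℤ)`, and what is left over is a theta series at `-2p/u`, to which
Jacobi's inversion formula applies. -/
lemma tsum_phi_term_residueClass (p : ℕ) [NeZero p] (r : ℕ) {u : ℂ} (hu : u ≠ 0) :
    ∑' m : ℤ, cexp (2 * π * Complex.I * ((m * p + r : ℤ) : ℂ) ^ 2 * ((u - 1) / (p * u))) =
      1 / (2 * Complex.I * p / u) ^ (1 / 2 : ℂ) * cexp (2 * π * Complex.I * (r : ℂ) ^ 2 / p) *
        jacobiTheta₂ (r / p) (u / (2 * p)) := by
  have hp : (p : ℂ) ≠ 0 := NeZero.ne _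
  have hshift : ∀ m : ℤ,
      cexp (2 * π * Complex.I * ((m * p + r : ℤ) : ℂ) ^ 2 * ((u - 1) / (p * u))) =
        cexp (2 * π * Complex.I * (r : ℂ) ^ 2 / p) *
          cexp (-(2 * π * Complex.I * (r : ℂ) ^ 2 / (p * u))) *
            jacobiTheta₂_term m (-2 * r / u) (-2 * p / u) := by
    intro m
    rw [jacobiTheta₂_term, ← Complex.exp_add, ← Complex.exp_add]
    calc _ = cexp (2 * π * Complex.I * (r : ℂ) ^ 2 / p +
          -(2 * π * Complex.I * (r : ℂ) ^ 2 / (p * u)) +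
            (2 * π * Complex.I * m * (-2 * r / u) + π * Complex.I * (m : ℂ) ^ 2 * (-2 * p / u)) +
              ((p * m ^ 2 + 2 * m * r : ℤ) : ℂ) * (2 * π * Complex.I)) := by
          congr 1; push_cast; field_simp; ring
      _ = _ := by rw [Complex.exp_add, Complex.exp_int_mul_two_pi_mul_I, mul_one]
  rw [tsum_congr hshift, tsum_mul_left, ← jacobiTheta₂, jacobiTheta₂_functional_equation,
    show -Complex.I * (-2 * p / u) = 2 * Complex.I * p / u by ring,
    show (-2 * r / u) / (-2 * p / u) = (r : ℂ) / p by field_simp,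
    show -1 / (-2 * p / u) = u / (2 * p) by field_simp,
    show -π * Complex.I * (-2 * r / u) ^ 2 / (-2 * p / u) =
      2 * π * Complex.I * (r : ℂ) ^ 2 / (p * u) by field_simp]
  have hcancel : cexp (-(2 * π * Complex.I * (r : ℂ) ^ 2 / (p * u))) *
      cexp (2 * π * Complex.I * (r : ℂ) ^ 2 / (p * u)) = 1 := by
    rw [← Complex.exp_add, neg_add_cancel, Complex.exp_zero]
  linear_combination (1 / (2 * Complex.I * p / u) ^ (1 / 2 : ℂ) *
    cexp (2 * π * Complex.I * (r : ℂ) ^ 2 / p) * jacobiTheta₂ (r / p) (u / (2 * p))) * hcancel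

lemma im_sub_one_div_natCast_mul_pos (p : ℕ) [NeZero p] {u : ℂ} (hu : 0 < u.im) :
    0 < ((u - 1) / (p * u)).im := by
  have hu0 : u ≠ 0 := fun h => by simp [h] at hu
  have hp : (0 : ℝ) < p := Nat.cast_pos.mpr (Nat.pos_of_neZero p)
  rw [show (u - 1) / (p * u) = (((p : ℝ)⁻¹ : ℝ) : ℂ) * (1 - u⁻¹) by push_cast; field_simp,
    im_ofReal_mul, sub_im, one_im, inv_im, zero_sub, neg_div, neg_neg]
  have := normSq_pos.mpr hu0
  positivity

lemma phi_sub_one_div_natCast_mul (p : ℕ) [NeZero p] {u : ℂ} (hu : 0 < u.im) :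
    phi ((u - 1) / (p * u)) = 1 / (2 * Complex.I * p / u) ^ (1 / 2 : ℂ) * twistedTheta p u := by
  have hu0 : u ≠ 0 := fun h => by simp [h] at hu
  rw [phi, tsum_int_eq_sum_fin_tsum (summable_phi_term (im_sub_one_div_natCast_mul_pos p hu)) p,
    twistedTheta, Finset.mul_sum]
  refine Finset.sum_congr rfl fun r _ => ?_
  rw [tsum_phi_term_residueClass p r hu0, mul_assoc]

lemma phi_pow_mul_phi_pow_div_eq (p : ℕ) [NeZero p] {u : ℂ} (hu : 0 < u.im) (n j : ℕ) :
    phi ((u - 1) / (p * u)) ^ (2 * n) * phi (1 - 1 / u) ^ (2 * j) / u ^ (n + j) =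
      twistedTheta p u ^ (2 * n) * jacobiTheta₂ 0 (u / 2) ^ (2 * j) /
        ((2 * Complex.I * p) ^ n * (2 * Complex.I) ^ j) := by
  have hu0 : u ≠ 0 := fun h => by simp [h] at hu
  have hp : (p : ℂ) ≠ 0 := NeZero.ne _
  rw [phi_sub_one_div_natCast_mul p hu, phi_one_sub_inv hu0, pow_mul, pow_mul,
    mul_pow _ _ 2, mul_pow _ _ 2, one_div_cpow_half_sq, one_div_cpow_half_sq]
  simp only [one_div_div, div_mul_eq_mul_div, div_pow]
  field_simp
  ring

lemma tendsto_jacobiTheta₂_comap_im_atTop (z : ℂ) :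
    Tendsto (jacobiTheta₂ z) (comap im atTop) (𝓝 1) := by
  have h : Tendsto (fun τ => ∑' n : ℤ, jacobiTheta₂_term n z τ) (comap im atTop)
      (𝓝 (∑' n : ℤ, if n = 0 then 1 else 0)) := by
    refine tendsto_tsum_of_dominated_convergence
      (bound := fun n : ℤ => rexp (-π * (1 * n ^ 2 - 2 * |z.im| * |n|))) ?_ ?_ ?_
    · simpa only [pow_zero, one_mul] using summable_pow_mul_jacobiTheta₂_term_bound |z.im| one_pos 0
    · intro n
      rcases eq_or_ne n 0 with rfl | hn
      · simpa [jacobiTheta₂_term] using tendsto_const_nhds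
      · rw [if_neg hn, tendsto_zero_iff_norm_tendsto_zero]
        simp_rw [norm_jacobiTheta₂_term]
        refine Real.tendsto_exp_atBot.comp (tendsto_atBot_add_const_right _ _ ?_)
        have hc : -π * (n : ℝ) ^ 2 < 0 := by
          have : (n : ℝ) ≠ 0 := by exact_mod_cast hn
          rw [neg_mul, neg_lt_zero]
          positivity
        exact tendsto_comap.const_mul_atTop_of_neg hc
    · filter_upwards [tendsto_comap.eventually_ge_atTop 1] with τ hτ n
      exact norm_jacobiTheta₂_term_le one_pos le_rfl hτ n
  rwa [tsum_ite_eq] at h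

lemma tendsto_div_ofReal_comap_im_atTop {c : ℝ} (hc : 0 < c) :
    Tendsto (fun z : ℂ => z / c) (comap im atTop) (comap im atTop) := by
  refine tendsto_comap_iff.mpr ?_
  simp only [Function.comp_def, div_ofReal_im]
  exact tendsto_comap.atTop_div_const hc

lemma tendsto_natCast_mul_add_one_comap_im_atTop {p : ℕ} (hp : p ≠ 0) :
    Tendsto (fun τ : ℍ => (p : ℂ) * τ + 1) atImInfty (comap im atTop) := by
  refine tendsto_comap_iff.mpr ?_
  simp only [Function.comp_def, add_im, one_im, add_zero, mul_im, natCast_re, natCast_im,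
    zero_mul, coe_im]
  exact tendsto_comap.const_mul_atTop (by positivity)

lemma tendsto_twistedTheta (p : ℕ) :
    Tendsto (twistedTheta p) (comap im atTop) (𝓝 (quadGaussSum p)) := by
  refine tendsto_finsetSum _ fun r _ => ?_
  have hp : (0 : ℝ) < 2 * p := by have := r.pos; positivity
  simpa using tendsto_const_nhds.mul
    ((tendsto_jacobiTheta₂_comap_im_atTop _).comp (tendsto_div_ofReal_comap_im_atTop hp))

lemma chi4_eq_χ₄ (n : ℤ) : chi4 n = ZMod.χ₄ n := by
  rw [chi4, ZMod.χ₄_int_eq_if_mod_four]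
  split_ifs <;> omega

lemma chi4_pow_eq_pow_of_even_add {n : ℤ} (hn : Odd n) {a b : ℕ} (hab : Even (a + b)) :
    chi4 n ^ a = chi4 n ^ b := by
  have h4 : n % 4 = 1 ∨ n % 4 = 3 := by rcases hn with ⟨m, rfl⟩; omega
  rcases h4 with h | h
  · rw [chi4, if_pos h, one_pow, one_pow]
  · obtain ⟨c, hc⟩ := hab
    rw [chi4, if_neg (by omega), if_pos h, neg_one_pow_eq_pow_mod_two,
      neg_one_pow_eq_pow_mod_two (n := b)]
    congr 1
    omega

lemma sum_addChar_sq_eq_gaussSum {F R : Type*} [Field F] [Fintype F] [DecidableEq F]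
    (hF : ringChar F ≠ 2) [CommRing R] [IsDomain R] {ψ : AddChar F R} (hψ : ψ.IsPrimitive) :
    ∑ x, ψ (x ^ 2) = gaussSum ((quadraticChar F).ringHomComp (Int.castRingHom R)) ψ := by
  have hfiber : ∀ a : F, ∑ x with x ^ 2 = a, ψ (x ^ 2) = (quadraticChar F a + 1 : R) * ψ a := by
    intro a
    rw [Finset.sum_congr rfl fun x hx => by rw [(Finset.mem_filter.mp hx).2], Finset.sum_const,
      nsmul_eq_mul]
    have := quadraticChar_card_sqrts hF a
    rw [Set.toFinset_ofPred] at this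
    congr 1
    exact_mod_cast congrArg (Int.cast : ℤ → R) this
  rw [← Finset.sum_fiberwise Finset.univ (· ^ 2), Finset.sum_congr rfl fun a _ => hfiber a]
  have hψ0 : ∑ a, ψ a = 0 := by simpa using AddChar.sum_mulShift 1 hψ
  simp only [add_mul, one_mul, Finset.sum_add_distrib, hψ0,
    add_zero, gaussSum, MulChar.ringHomComp_apply, eq_intCast]

lemma sq_sum_addChar_sq {F R : Type*} [Field F] [Fintype F] [DecidableEq F]
    (hF : ringChar F ≠ 2) [CommRing R] [IsDomain R] [CharZero R] {ψ : AddChar F R}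
    (hψ : ψ.IsPrimitive) :
    (∑ x, ψ (x ^ 2)) ^ 2 = quadraticChar F (-1) * Fintype.card F := by
  rw [sum_addChar_sq_eq_gaussSum hF hψ, gaussSum_sq _ _ hψ]
  · simp
  · exact (MulChar.ringHomComp_ne_one_iff Int.cast_injective).mpr (quadraticChar_ne_one hF)
  · exact (quadraticChar_isQuadratic F).comp _

lemma sum_fin_natCast_zmod {M : Type*} [AddCommMonoid M] (N : ℕ) [NeZero N] (g : ZMod N → M) :
    ∑ r : Fin N, g (r : ℕ) = ∑ x, g x := by
  obtain ⟨n, rfl⟩ := Nat.exists_eq_succ_of_ne_zero (NeZero.ne N)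
  exact Fintype.sum_congr _ _ fun r => congrArg g (Fin.cast_val_eq_self r)

lemma quadGaussSum_eq_sum_stdAddChar (p : ℕ) [NeZero p] :
    quadGaussSum p = ∑ x : ZMod p, ZMod.stdAddChar (x ^ 2) := by
  rw [quadGaussSum, ← sum_fin_natCast_zmod]
  refine Fintype.sum_congr _ _ fun r => ?_
  rw [show ((r : ℕ) : ZMod p) ^ 2 = (((r : ℕ) ^ 2 : ℕ) : ℤ) by push_cast; rfl, ZMod.stdAddChar_coe]
  push_cast
  ring_nf

lemma quadGaussSum_sq {p : ℕ} (hp : p.Prime) (hodd : Odd p) :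
    quadGaussSum p ^ 2 = chi4 p * p := by
  have := Fact.mk hp
  have hF : ringChar (ZMod p) ≠ 2 := by
    rw [ZMod.ringChar_zmod_n]; rintro rfl; exact Nat.not_odd_iff_even.mpr even_two hodd
  rw [quadGaussSum_eq_sum_stdAddChar, sq_sum_addChar_sq hF (ZMod.isPrimitive_stdAddChar p),
    quadraticChar_neg_one hF, ZMod.card, chi4_eq_χ₄]
  simp

lemma quadGaussSum_pow_div_eq {p : ℕ} (hp : p.Prime) (hodd : Odd p) {n j k : ℕ}
    (hnjk : n + j = 2 * k) :
    quadGaussSum p ^ (2 * n) / ((2 * Complex.I * p) ^ n * (2 * Complex.I) ^ j) =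
      (-1) ^ k * chi4 p ^ j / 2 ^ (2 * k) := by
  have hp0 : (p : ℂ) ≠ 0 := Nat.cast_ne_zero.mpr hp.ne_zero
  have hchi : (chi4 p : ℂ) ^ n = chi4 p ^ j := by
    exact_mod_cast chi4_pow_eq_pow_of_even_add ((Int.odd_coe_nat p).mpr hodd) ⟨k, by omega⟩
  have hI : (2 * Complex.I) ^ n * (2 * Complex.I) ^ j = (-1) ^ k * 2 ^ (2 * k) := by
    rw [← pow_add, hnjk, pow_mul, mul_pow, Complex.I_sq, pow_mul, ← mul_pow]
    norm_num
  rw [pow_mul, quadGaussSum_sq hp hodd, mul_pow, hchi, mul_pow, mul_right_comm, hI]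
  field_simp
  rw [← pow_mul, pow_mul', neg_one_sq, one_pow, mul_one]

theorem theta_constant_term_cusp_one_over_p_general (p : ℕ) (hp : p.Prime) (hodd : Odd p)
    (k : ℕ) (j : ℕ) (hj : j ≤ 2 * k) :
    Tendsto (fun τ : ℍ =>
        phi ((τ : ℂ) / ((p : ℂ) * τ + 1)) ^ (4 * k - 2 * j) *
          phi ((p : ℂ) * τ / ((p : ℂ) * τ + 1)) ^ (2 * j) / ((p : ℂ) * τ + 1) ^ (2 * k))
      atImInfty (nhds ((-1 : ℂ) ^ k * (chi4 p : ℂ) ^ j / 2 ^ (2 * k))) := by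
  have := NeZero.mk hp.ne_zero
  set n := 2 * k - j
  have hnjk : n + j = 2 * k := by omega
  have hlim : Tendsto (fun u => twistedTheta p u ^ (2 * n) * jacobiTheta₂ 0 (u / 2) ^ (2 * j) /
      ((2 * Complex.I * p) ^ n * (2 * Complex.I) ^ j)) (comap im atTop)
      (𝓝 ((-1 : ℂ) ^ k * (chi4 p : ℂ) ^ j / 2 ^ (2 * k))) := by
    rw [← quadGaussSum_pow_div_eq hp hodd hnjk]
    have hθ := (tendsto_jacobiTheta₂_comap_im_atTop 0).comp
      (tendsto_div_ofReal_comap_im_atTop two_pos)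
    simpa using (((tendsto_twistedTheta p).pow _).mul (hθ.pow _)).div_const _
  refine (hlim.comp (tendsto_natCast_mul_add_one_comap_im_atTop hp.ne_zero)).congr fun τ => ?_
  have hu : 0 < ((p : ℂ) * τ + 1).im := by simpa using mul_pos (Nat.cast_pos.mpr hp.pos) τ.2
  have hu0 : (p : ℂ) * τ + 1 ≠ 0 := fun h => by simp [h] at hu
  have hp0 : (p : ℂ) ≠ 0 := NeZero.ne _
  rw [Function.comp_apply, ← phi_pow_mul_phi_pow_div_eq p hu, hnjk,
    show 4 * k - 2 * j = 2 * n by omega]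
  congr 4 <;> field_simp <;> ring

theorem theta_constant_term_cusp_one_over_p (p : ℕ) (hp : p.Prime) (hodd : Odd p)
    (k : ℕ) (hk : 1 ≤ k) (j : ℕ) (hj : j ≤ 2 * k) :
    Tendsto (fun τ : ℍ =>
        phi ((τ : ℂ) / ((p : ℂ) * τ + 1)) ^ (4 * k - 2 * j) *
          phi ((p : ℂ) * τ / ((p : ℂ) * τ + 1)) ^ (2 * j) / ((p : ℂ) * τ + 1) ^ (2 * k))
      atImInfty (nhds ((-1 : ℂ) ^ k * (chi4 p : ℂ) ^ j / 2 ^ (2 * k))) :=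
  theta_constant_term_cusp_one_over_p_general p hp hodd k j hj
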